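/- arXiv:2112.13488 — 9 statements merged into one kernel-verified Lean document; each statement's English description precedes it below -/
import Mathlib

section
/- Let C be a linear code over R and suppose the Gray matrix M satisfies M·Mᵀ = k·I₅ with k ∈ F_q. Then for any x ∈ C and y ∈ C⊥, the Gray images satisfy Φ(x)·Φ(y) = 0; consequently Φ(C⊥) ⊆ Φ(C)⊥. -/
open Polynomial Matrix

set_option synthInstance.maxHeartbeats 1000000
set_option maxHeartbeats 1000000

/-- The ring `R = F_q[v]/⟨v⁵ - v⟩`. -/
noncomputable abbrev Rring (F : Type*) [Field F] : Type _ :=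
  F[X] ⧸ Ideal.span {(X : F[X]) ^ 5 - X}

/-- if the Gray matrix satisfies `M·Mᵀ = k·I₅`, then for any `x ∈ C` and
`y ∈ C⊥` (indeed for any `x, y ∈ Rⁿ` with `x·y = 0`) the Gray images satisfy
`Φ(x)·Φ(y) = 0`; consequently `Φ(C⊥) ⊆ Φ(C)⊥`. -/
theorem stmt8 (p r n : ℕ) (hp : p.Prime) (hodd : Odd p) (h4 : 4 ∣ (p - 1)) (hr : 0 < r)
    (F : Type*) [Field F] [Fintype F] (hcard : Fintype.card F = p ^ r)
    (η : Fin 5 → Rring F)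
    (hne : ∀ i, η i ≠ 0) (hidem : ∀ i, η i ^ 2 = η i)
    (horth : ∀ i j, i ≠ j → η i * η j = 0) (hsum : ∑ i, η i = 1)
    (b : Rring F →ₗ[F] (Fin 5 → F))
    (hb : ∀ s : Rring F, s = ∑ i, algebraMap F (Rring F) (b s i) * η i)
    (M : Matrix (Fin 5) (Fin 5) F)
    (hM : M = !![6, 2, 3, -6, 6;
                 6, 6, 2, 3, -6;
                 -6, 6, 6, 2, 3;
                 3, -6, 6, 6, 2;
                 2, 3, -6, 6, 6])
    (k : F) (hk : M * M.transpose = k • (1 : Matrix (Fin 5) (Fin 5) F))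
    (Φ : (Fin n → Rring F) → (Fin n × Fin 5 → F))
    (hΦ : ∀ (x : Fin n → Rring F) (q : Fin n × Fin 5),
      Φ x q = Matrix.vecMul (b (x q.1)) M q.2)
    (C : Submodule (Rring F) (Fin n → Rring F)) :
    (∀ x y : Fin n → Rring F, x ∈ C → (∀ c ∈ C, ∑ i, y i * c i = 0) →
      ∑ q : Fin n × Fin 5, Φ x q * Φ y q = 0) ∧
    (∀ y : Fin n → Rring F, (∀ c ∈ C, ∑ i, y i * c i = 0) →
      ∀ u ∈ Φ '' (C : Set (Fin n → Rring F)), ∑ q : Fin n × Fin 5, Φ y q * u q = 0) := by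
  set aM : F →+* Rring F := algebraMap F (Rring F) with haM
  -- product expansion via idempotents
  have expand : ∀ s t : Rring F, s * t = ∑ j, aM (b s j * b t j) * η j := by
    intro s t
    conv_lhs => rw [hb s, hb t]
    rw [Finset.sum_mul_sum]
    refine Finset.sum_congr rfl fun i _ => ?_
    rw [Finset.sum_eq_single i]
    · have hii : η i * η i = η i := by rw [← sq, hidem]
      rw [mul_mul_mul_comm, hii, ← _root_.map_mul]
    · intro j _ hj
      rw [mul_mul_mul_comm, horth i j (Ne.symm hj), mul_zero]
    · intro h; exact absurd (Finset.mem_univ i) h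
  -- linear independence of the idempotents over F
  have indep : ∀ a : Fin 5 → F, (∑ j, aM (a j) * η j = 0) → ∀ j, a j = 0 := by
    intro a h j
    by_contra haj
    have h1 : (∑ j', aM (a j') * η j') * η j = aM (a j) * η j := by
      rw [Finset.sum_mul, Finset.sum_eq_single j]
      · have hjj : η j * η j = η j := by rw [← sq, hidem]
        rw [mul_assoc, hjj]
      · intro j' _ hj'
        rw [mul_assoc, horth j' j hj', mul_zero]
      · intro h'; exact absurd (Finset.mem_univ j) h'
    rw [h, zero_mul] at h1
    have h2 : aM (a j)⁻¹ * (aM (a j) * η j) = η j := by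
      rw [← mul_assoc, ← _root_.map_mul, inv_mul_cancel₀ haj, _root_.map_one, one_mul]
    rw [← h1, mul_zero] at h2
    exact hne j h2.symm
  -- the dot product identity from M Mᵀ = k I
  have key : ∀ u w : Fin 5 → F,
      ∑ j, Matrix.vecMul u M j * Matrix.vecMul w M j = k * ∑ j, u j * w j := by
    intro u w
    have h1 : Matrix.vecMul u M ⬝ᵥ Matrix.vecMul w M = k * (u ⬝ᵥ w) := by
      calc Matrix.vecMul u M ⬝ᵥ Matrix.vecMul w M
          = Matrix.vecMul u M ⬝ᵥ Mᵀ *ᵥ w := by rw [Matrix.mulVec_transpose]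
        _ = Matrix.vecMul (Matrix.vecMul u M) Mᵀ ⬝ᵥ w := by
            rw [Matrix.dotProduct_mulVec]
        _ = Matrix.vecMul u (M * Mᵀ) ⬝ᵥ w := by rw [Matrix.vecMul_vecMul]
        _ = Matrix.vecMul u (k • (1 : Matrix (Fin 5) (Fin 5) F)) ⬝ᵥ w := by rw [hk]
        _ = (k • u) ⬝ᵥ w := by
            congr 1
            ext i
            simp [Matrix.vecMul, dotProduct, Matrix.one_apply, mul_comm]
        _ = k * (u ⬝ᵥ w) := by rw [smul_dotProduct, smul_eq_mul]
    simpa [dotProduct] using h1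
  -- main statement
  have main : ∀ x y : Fin n → Rring F, x ∈ C → (∀ c ∈ C, ∑ i, y i * c i = 0) →
      ∑ q : Fin n × Fin 5, Φ x q * Φ y q = 0 := by
    intro x y hx hy
    have hS : ∀ j, ∑ i, b (y i) j * b (x i) j = 0 := by
      apply indep
      calc ∑ j, aM (∑ i, b (y i) j * b (x i) j) * η j
          = ∑ j, ∑ i, aM (b (y i) j * b (x i) j) * η j := by
            simp [map_sum, Finset.sum_mul]
        _ = ∑ i, ∑ j, aM (b (y i) j * b (x i) j) * η j := Finset.sum_comm
        _ = ∑ i, y i * x i := Finset.sum_congr rfl fun i _ => (expand (y i) (x i)).symm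
        _ = 0 := hy x hx
    calc ∑ q : Fin n × Fin 5, Φ x q * Φ y q
        = ∑ i : Fin n, ∑ j : Fin 5,
            Matrix.vecMul (b (x i)) M j * Matrix.vecMul (b (y i)) M j := by
          rw [Fintype.sum_prod_type]
          exact Finset.sum_congr rfl fun i _ => Finset.sum_congr rfl fun j _ => by
            rw [hΦ x (i, j), hΦ y (i, j)]
      _ = ∑ i : Fin n, k * ∑ j, b (x i) j * b (y i) j :=
          Finset.sum_congr rfl fun i _ => key _ _
      _ = k * ∑ j, ∑ i, b (y i) j * b (x i) j := by
          rw [← Finset.mul_sum, Finset.sum_comm]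
          congr 1
          exact Finset.sum_congr rfl fun j _ => Finset.sum_congr rfl fun i _ => mul_comm _ _
      _ = 0 := by simp [hS]
  refine ⟨main, ?_⟩
  intro y hy u hu
  obtain ⟨c, hc, rfl⟩ := hu
  have := main c y hc hy
  calc ∑ q : Fin n × Fin 5, Φ y q * Φ c q
      = ∑ q : Fin n × Fin 5, Φ c q * Φ y q :=
        Finset.sum_congr rfl fun q _ => mul_comm _ _
    _ = 0 := this
end

section
/- If C is a linear code over R, then Φ(C⊥) = Φ(C)⊥; moreover, if C is self-orthogonal (C ⊆ C⊥), then Φ(C) is a self-orthogonal code over F_q. -/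
open Polynomial Matrix

set_option synthInstance.maxHeartbeats 1000000
set_option maxHeartbeats 1000000

/-- if `C` is a linear code over `R`, then `Φ(C⊥) = Φ(C)⊥`; moreover, if
`C` is self-orthogonal (`C ⊆ C⊥`), then `Φ(C)` is self-orthogonal over `F_q`. -/
theorem stmt9 (p r n : ℕ) (hp : p.Prime) (hodd : Odd p) (h4 : 4 ∣ (p - 1)) (hr : 0 < r)
    (F : Type*) [Field F] [Fintype F] (hcard : Fintype.card F = p ^ r)
    (η : Fin 5 → Rring F)
    (hne : ∀ i, η i ≠ 0) (hidem : ∀ i, η i ^ 2 = η i)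
    (horth : ∀ i j, i ≠ j → η i * η j = 0) (hsum : ∑ i, η i = 1)
    (b : Rring F →ₗ[F] (Fin 5 → F))
    (hb : ∀ s : Rring F, s = ∑ i, algebraMap F (Rring F) (b s i) * η i)
    (M : Matrix (Fin 5) (Fin 5) F)
    (hM : M = !![6, 2, 3, -6, 6;
                 6, 6, 2, 3, -6;
                 -6, 6, 6, 2, 3;
                 3, -6, 6, 6, 2;
                 2, 3, -6, 6, 6])
    (k : F) (hk : M * M.transpose = k • (1 : Matrix (Fin 5) (Fin 5) F)) (hk0 : k ≠ 0)
    (Φ : (Fin n → Rring F) → (Fin n × Fin 5 → F))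
    (hΦ : ∀ (x : Fin n → Rring F) (q : Fin n × Fin 5),
      Φ x q = Matrix.vecMul (b (x q.1)) M q.2)
    (C : Submodule (Rring F) (Fin n → Rring F)) :
    Φ '' {y : Fin n → Rring F | ∀ c ∈ C, ∑ i, y i * c i = 0} =
      {w : Fin n × Fin 5 → F |
        ∀ u ∈ Φ '' (C : Set (Fin n → Rring F)), ∑ q : Fin n × Fin 5, w q * u q = 0} ∧
    ((∀ x ∈ C, ∀ c ∈ C, ∑ i, x i * c i = 0) →
      ∀ u ∈ Φ '' (C : Set (Fin n → Rring F)), ∀ w ∈ Φ '' (C : Set (Fin n → Rring F)),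
        ∑ q : Fin n × Fin 5, u q * w q = 0) := by

  -- η i * η i = η i
  have hii : ∀ i, η i * η i = η i := fun i => by rw [← sq, hidem]
  -- linear independence of the η's
  have L1 : ∀ a : Fin 5 → F, ∑ i, algebraMap F (Rring F) (a i) * η i = 0 → ∀ i, a i = 0 := by
    intro a ha l
    by_contra h
    have h2 : (∑ i, algebraMap F (Rring F) (a i) * η i) * η l
        = algebraMap F (Rring F) (a l) * η l := by
      rw [Finset.sum_mul, Finset.sum_eq_single l]
      · rw [mul_assoc, hii]
      · intro i _ hil
        rw [mul_assoc, horth i l hil, mul_zero]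
      · simp
    rw [ha, zero_mul] at h2
    have h3 : η l = 0 := by
      have h4 : algebraMap F (Rring F) ((a l)⁻¹) * (algebraMap F (Rring F) (a l) * η l)
          = 0 := by rw [← h2, mul_zero]
      rwa [← mul_assoc, ← _root_.map_mul, inv_mul_cancel₀ h, _root_.map_one, one_mul] at h4
    exact hne l h3
  -- uniqueness of coordinates
  have Luniq : ∀ (a : Fin 5 → F) (s : Rring F),
      s = ∑ i, algebraMap F (Rring F) (a i) * η i → b s = a := by
    intro a s hs
    funext l
    have h0 : ∑ i, algebraMap F (Rring F) (b s i - a i) * η i = 0 := by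
      have := (hb s).symm.trans hs
      simp only [map_sub, sub_mul, Finset.sum_sub_distrib]
      rw [sub_eq_zero]
      exact this
    exact sub_eq_zero.mp (L1 _ h0 l)
  -- product representation
  have mulrep : ∀ s t : Rring F,
      s * t = ∑ j, algebraMap F (Rring F) (b s j * b t j) * η j := by
    intro s t
    have h1 : s * t = ∑ i, ∑ j,
        (algebraMap F (Rring F) (b s i) * η i) * (algebraMap F (Rring F) (b t j) * η j) := by
      rw [← Finset.sum_mul_sum, ← hb s, ← hb t]
    rw [h1]
    refine Finset.sum_congr rfl fun i _ => ?_
    rw [Finset.sum_eq_single i]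
    · rw [mul_mul_mul_comm, hii, _root_.map_mul]
    · intro j _ hji
      rw [mul_mul_mul_comm, horth i j (Ne.symm hji), mul_zero]
    · simp
  have bmul : ∀ s t : Rring F, b (s * t) = fun j => b s j * b t j := by
    intro s t
    exact Luniq _ _ (mulrep s t)
  -- coordinates of η l
  have beta : ∀ l, b (η l) = fun j => if j = l then (1 : F) else 0 := by
    intro l
    refine Luniq _ _ ?_
    rw [Finset.sum_eq_single l]
    · simp
    · intro j _ hjl
      simp [hjl]
    · simp
  -- key matrix identity
  have hMM : ∀ a c : Fin 5, ∑ j, M a j * M c j = k * (if a = c then (1:F) else 0) := by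
    intro a c
    have := congrFun (congrFun hk a) c
    simpa [Matrix.mul_apply, Matrix.transpose_apply, Matrix.one_apply,
      Matrix.smul_apply, smul_eq_mul] using this
  have key : ∀ u v : Fin 5 → F,
      ∑ j, Matrix.vecMul u M j * Matrix.vecMul v M j = k * ∑ a, u a * v a := by
    intro u v
    simp only [Matrix.vecMul, dotProduct]
    calc ∑ j, (∑ a, u a * M a j) * ∑ c, v c * M c j
        = ∑ j, ∑ a, ∑ c, (u a * v c) * (M a j * M c j) := by
          refine Finset.sum_congr rfl fun j _ => ?_
          rw [Finset.sum_mul_sum]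
          exact Finset.sum_congr rfl fun a _ =>
            Finset.sum_congr rfl fun c _ => by ring
      _ = ∑ a, ∑ c, (u a * v c) * ∑ j, M a j * M c j := by
          rw [Finset.sum_comm]
          refine Finset.sum_congr rfl fun a _ => ?_
          rw [Finset.sum_comm]
          exact Finset.sum_congr rfl fun c _ => (Finset.mul_sum _ _ _).symm
      _ = k * ∑ a, u a * v a := by
          simp only [hMM]
          rw [Finset.mul_sum]
          refine Finset.sum_congr rfl fun a _ => ?_
          rw [Finset.sum_eq_single a]
          · simp; ring
          · intro c _ hca
            simp [Ne.symm hca]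
          · simp
  -- Gray image inner product
  have Phidot : ∀ x y : Fin n → Rring F,
      ∑ q : Fin n × Fin 5, Φ x q * Φ y q = k * ∑ i, ∑ j, b (x i) j * b (y i) j := by
    intro x y
    rw [Fintype.sum_prod_type]
    simp only [hΦ]
    rw [Finset.mul_sum]
    exact Finset.sum_congr rfl fun i _ => key _ _
  -- R-inner product representation
  have Rdot : ∀ x y : Fin n → Rring F,
      ∑ i, x i * y i = ∑ j, algebraMap F (Rring F) (∑ i, b (x i) j * b (y i) j) * η j := by
    intro x y
    calc ∑ i, x i * y i
        = ∑ i, ∑ j, algebraMap F (Rring F) (b (x i) j * b (y i) j) * η j :=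
          Finset.sum_congr rfl fun i _ => mulrep _ _
      _ = ∑ j, ∑ i, algebraMap F (Rring F) (b (x i) j * b (y i) j) * η j :=
          Finset.sum_comm
      _ = ∑ j, algebraMap F (Rring F) (∑ i, b (x i) j * b (y i) j) * η j := by
          refine Finset.sum_congr rfl fun j _ => ?_
          rw [map_sum, Finset.sum_mul]
  have Rdot_zero : ∀ x y : Fin n → Rring F,
      (∑ i, x i * y i = 0) ↔ ∀ j, ∑ i, b (x i) j * b (y i) j = 0 := by
    intro x y
    constructor
    · intro h j
      rw [Rdot] at h
      exact L1 _ h j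
    · intro h
      rw [Rdot]
      simp [h]
  -- invertibility of M and surjectivity of Φ
  have hMN : M * (k⁻¹ • M.transpose) = 1 := by
    rw [Matrix.mul_smul, hk, smul_smul, inv_mul_cancel₀ hk0, one_smul]
  have hNM : (k⁻¹ • M.transpose) * M = 1 := mul_eq_one_comm.mp hMN
  have Phisurj : ∀ w : Fin n × Fin 5 → F, ∃ y : Fin n → Rring F, Φ y = w := by
    intro w
    set N := k⁻¹ • M.transpose with hN
    refine ⟨fun i => ∑ j, algebraMap F (Rring F)
      (Matrix.vecMul (fun l => w (i, l)) N j) * η j, ?_⟩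
    funext q
    obtain ⟨i, j⟩ := q
    rw [hΦ]
    have hby : b (∑ j, algebraMap F (Rring F)
        (Matrix.vecMul (fun l => w (i, l)) N j) * η j)
        = Matrix.vecMul (fun l => w (i, l)) N := Luniq _ _ rfl
    simp only [hby]
    rw [Matrix.vecMul_vecMul, hNM, Matrix.vecMul_one]
  -- the main equality
  constructor
  · ext w
    constructor
    · rintro ⟨y, hy, rfl⟩ u ⟨c, hc, rfl⟩
      rw [Phidot]
      have h := (Rdot_zero y c).mp (hy c hc)
      have : ∑ i, ∑ j, b (y i) j * b (c i) j = 0 := by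
        rw [Finset.sum_comm]
        simp [h]
      rw [this, mul_zero]
    · intro hw
      obtain ⟨y, rfl⟩ := Phisurj w
      refine ⟨y, ?_, rfl⟩
      intro c hc
      rw [Rdot_zero]
      intro l
      have hc' : (η l) • c ∈ C := C.smul_mem _ hc
      have h0 := hw (Φ (η l • c)) ⟨_, hc', rfl⟩
      rw [Phidot] at h0
      have hcoord : ∀ i j, b ((η l • c) i) j
          = (if j = l then (1:F) else 0) * b (c i) j := by
        intro i j
        have : (η l • c) i = η l * c i := rfl
        rw [this, bmul]
        simp [beta]
      simp only [hcoord] at h0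
      have h1 : ∀ i : Fin n, ∑ j, b (y i) j * ((if j = l then (1:F) else 0) * b (c i) j)
          = b (y i) l * b (c i) l := by
        intro i
        rw [Finset.sum_eq_single l]
        · simp
        · intro j _ hjl
          simp [hjl]
        · simp
      simp only [h1] at h0
      rcases mul_eq_zero.mp h0 with h | h
      · exact absurd h hk0
      · exact h
  · intro hso u hu w hw
    obtain ⟨x, hx, rfl⟩ := hu
    obtain ⟨c, hc, rfl⟩ := hw
    rw [Phidot]
    have h := (Rdot_zero x c).mp (hso x hx c hc)
    have : ∑ i, ∑ j, b (x i) j * b (c i) j = 0 := by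
      rw [Finset.sum_comm]
      simp [h]
    rw [this, mul_zero]
end

section
/- Every linear code C of length n over R decomposes uniquely as C = C₁η₁ ⊕ C₂η₂ ⊕ C₃η₃ ⊕ C₄η₄ ⊕ C₅η₅, where each Cᵢ ⊆ F_qⁿ is the F_q-linear code {cᵢ : ∃ c_j (j≠i), Σ_j c_j η_j ∈ C}. -/
open Polynomial

set_option synthInstance.maxHeartbeats 1000000
set_option maxHeartbeats 1000000

/-- every linear code `C` of length `n` over `R` decomposes uniquely as
`C = C₁η₁ ⊕ ⋯ ⊕ C₅η₅`, where `Cᵢ = {cᵢ : ∃ c_j (j≠i), Σ_j c_jη_j ∈ C} ⊆ F_qⁿ`: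
i.e. `x ∈ C` iff `x` is, in a unique way, of the form `Σᵢ cᵢηᵢ` with each `cᵢ ∈ Cᵢ`. -/
theorem stmt10 (p r n : ℕ) (hp : p.Prime) (hodd : Odd p) (h4 : 4 ∣ (p - 1)) (hr : 0 < r)
    (F : Type*) [Field F] [Fintype F] (hcard : Fintype.card F = p ^ r)
    (η : Fin 5 → Rring F)
    (hne : ∀ i, η i ≠ 0) (hidem : ∀ i, η i ^ 2 = η i)
    (horth : ∀ i j, i ≠ j → η i * η j = 0) (hsum : ∑ i, η i = 1)
    (hcrt : ∀ s : Rring F, ∃ b : Fin 5 → F,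
      s = ∑ i, algebraMap F (Rring F) (b i) * η i)
    (C : Submodule (Rring F) (Fin n → Rring F)) :
    ∀ x : Fin n → Rring F, x ∈ C ↔
      ∃! cs : Fin 5 → (Fin n → F),
        (∀ i : Fin 5, cs i ∈ {c : Fin n → F | ∃ ds : Fin 5 → (Fin n → F), ds i = c ∧
            (fun j => ∑ m, algebraMap F (Rring F) (ds m j) * η m) ∈ C}) ∧
        x = fun j => ∑ i, algebraMap F (Rring F) (cs i j) * η i := by

  have hcancel : ∀ (k : Fin 5) (a b : F),
      algebraMap F (Rring F) a * η k = algebraMap F (Rring F) b * η k → a = b := by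
    intro k a b h
    by_contra hab
    have hd : a - b ≠ 0 := sub_ne_zero.mpr hab
    apply hne k
    have h0 : algebraMap F (Rring F) (a - b) * η k = 0 := by
      rw [map_sub, sub_mul, h, sub_self]
    calc η k = algebraMap F (Rring F) ((a - b)⁻¹ * (a - b)) * η k := by
          rw [inv_mul_cancel₀ hd, map_one, one_mul]
      _ = algebraMap F (Rring F) (a - b)⁻¹ * (algebraMap F (Rring F) (a - b) * η k) := by
          rw [map_mul, mul_assoc]
      _ = 0 := by rw [h0, mul_zero]
  have hkey : ∀ (a : Fin 5 → F) (k : Fin 5),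
      (∑ i, algebraMap F (Rring F) (a i) * η i) * η k
        = algebraMap F (Rring F) (a k) * η k := by
    intro a k
    rw [Finset.sum_mul, Finset.sum_eq_single k]
    · rw [mul_assoc, ← pow_two, hidem]
    · intro i _ hik
      rw [mul_assoc, horth i k hik, mul_zero]
    · simp
  intro x
  constructor
  · intro hx
    choose b hb using fun j => hcrt (x j)
    refine ⟨fun i j => b j i, ⟨?_, ?_⟩, ?_⟩
    · intro i
      refine ⟨fun m j => b j m, rfl, ?_⟩
      have : (fun j => ∑ m, algebraMap F (Rring F) (b j m) * η m) = x := by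
        funext j; exact (hb j).symm
      rw [this]; exact hx
    · funext j; exact hb j
    · rintro cs' ⟨_, hx'⟩
      funext i j
      apply hcancel i
      have h1 : ∑ m, algebraMap F (Rring F) (cs' m j) * η m
          = ∑ m, algebraMap F (Rring F) (b j m) * η m := by
        rw [← congrFun hx' j]; exact hb j
      have h2 := congrArg (· * η i) h1
      simpa only [hkey] using h2
  · rintro ⟨cs, ⟨hmem, hxeq⟩, -⟩
    choose ds hds hdsC using hmem
    have hx2 : x = ∑ i : Fin 5,
        (η i • fun j => ∑ m, algebraMap F (Rring F) (ds i m j) * η m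
          : Fin n → Rring F) := by
      funext j
      rw [hxeq]
      simp only [Finset.sum_apply, Pi.smul_apply, smul_eq_mul]
      refine Finset.sum_congr rfl fun i _ => ?_
      rw [mul_comm (η i), hkey, congrFun (hds i) j]
    rw [hx2]
    exact Submodule.sum_mem C fun i _ => Submodule.smul_mem C (η i) (hdsC i)
end

section
/- If C = C₁η₁ ⊕ C₂η₂ ⊕ C₃η₃ ⊕ C₄η₄ ⊕ C₅η₅ is a linear code of length n over R, then its dual satisfies C⊥ = C₁⊥η₁ ⊕ C₂⊥η₂ ⊕ C₃⊥η₃ ⊕ C₄⊥η₄ ⊕ C₅⊥η₅. -/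
open Polynomial

set_option synthInstance.maxHeartbeats 1000000
set_option maxHeartbeats 1000000

/-- if `C = C₁η₁ ⊕ ⋯ ⊕ C₅η₅` is a linear code of length `n` over `R`,
then `C⊥ = C₁⊥η₁ ⊕ ⋯ ⊕ C₅⊥η₅`. -/
theorem stmt11 (p r n : ℕ) (hp : p.Prime) (hodd : Odd p) (h4 : 4 ∣ (p - 1)) (hr : 0 < r)
    (F : Type*) [Field F] [Fintype F] (hcard : Fintype.card F = p ^ r)
    (η : Fin 5 → Rring F)
    (hne : ∀ i, η i ≠ 0) (hidem : ∀ i, η i ^ 2 = η i)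
    (horth : ∀ i j, i ≠ j → η i * η j = 0) (hsum : ∑ i, η i = 1)
    (hcrt : ∀ s : Rring F, ∃ b : Fin 5 → F,
      s = ∑ i, algebraMap F (Rring F) (b i) * η i)
    (Ci : Fin 5 → Submodule F (Fin n → F))
    (Ccode : Set (Fin n → Rring F))
    (hCcode : Ccode = {x | ∃ cs : Fin 5 → (Fin n → F), (∀ i, cs i ∈ Ci i) ∧
      x = fun j => ∑ i, algebraMap F (Rring F) (cs i j) * η i}) :
    {y : Fin n → Rring F | ∀ c ∈ Ccode, ∑ j, y j * c j = 0} =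
      {x : Fin n → Rring F | ∃ cs : Fin 5 → (Fin n → F),
        (∀ i, ∀ d ∈ Ci i, ∑ j, cs i j * d j = 0) ∧
        x = fun j => ∑ i, algebraMap F (Rring F) (cs i j) * η i} := by
  subst hCcode
  set A := algebraMap F (Rring F) with hA
  have hη : ∀ i, η i * η i = η i := fun i => by rw [← sq, hidem]
  have mul_lem : ∀ a b : Fin 5 → F,
      (∑ i, A (a i) * η i) * (∑ i, A (b i) * η i) = ∑ i, A (a i * b i) * η i := by
    intro a b
    rw [Finset.sum_mul_sum]
    refine Finset.sum_congr rfl fun i _ => ?_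
    rw [Finset.sum_eq_single i]
    · rw [map_mul]
      calc A (a i) * η i * (A (b i) * η i) = A (a i) * A (b i) * (η i * η i) := by ring
        _ = A (a i) * A (b i) * η i := by rw [hη]
    · intro k _ hk
      calc A (a i) * η i * (A (b k) * η k) = A (a i) * A (b k) * (η i * η k) := by ring
        _ = 0 := by rw [horth i k (Ne.symm hk), mul_zero]
    · intro h; exact absurd (Finset.mem_univ i) h
  have indep : ∀ b : Fin 5 → F, (∑ i, A (b i) * η i) = 0 → ∀ k, b k = 0 := by
    intro b h k
    by_contra hb
    have h2 : (∑ i, A (b i) * η i) * η k = 0 := by rw [h, zero_mul]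
    rw [Finset.sum_mul, Finset.sum_eq_single k] at h2
    · have h3 : A (b k) * η k = 0 := by
        rw [mul_assoc, hη] at h2; exact h2
      have : η k = 0 := by
        have hu : A ((b k)⁻¹) * (A (b k) * η k) = η k := by
          rw [← mul_assoc, ← map_mul, inv_mul_cancel₀ hb, map_one, one_mul]
        rw [h3, mul_zero] at hu; exact hu.symm
      exact hne k this
    · intro i _ hik
      rw [mul_assoc, horth i k hik, mul_zero]
    · intro h; exact absurd (Finset.mem_univ k) h
  have collect : ∀ e : Fin 5 → Fin n → F,
      (∑ j, ∑ i, A (e i j) * η i) = ∑ i, A (∑ j, e i j) * η i := by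
    intro e
    rw [Finset.sum_comm]
    refine Finset.sum_congr rfl fun i _ => ?_
    rw [← Finset.sum_mul, ← map_sum]
  have pair : ∀ a b : Fin 5 → Fin n → F,
      (∑ j, (∑ i, A (a i j) * η i) * (∑ i, A (b i j) * η i))
        = ∑ i, A (∑ j, a i j * b i j) * η i := by
    intro a b
    rw [Finset.sum_congr rfl fun j _ => mul_lem (fun i => a i j) (fun i => b i j)]
    exact collect _
  ext y
  simp only [Set.mem_setOf_eq]
  constructor
  · intro hy
    set cs : Fin 5 → Fin n → F := fun i j => Classical.choose (hcrt (y j)) i with hcs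
    have hspec : ∀ j, y j = ∑ i, A (cs i j) * η i := fun j =>
      Classical.choose_spec (hcrt (y j))
    refine ⟨cs, ?_, funext fun j => hspec j⟩
    intro i d hd
    set ds : Fin 5 → Fin n → F := fun k => if k = i then d else 0 with hds
    have hmem : ∀ k, ds k ∈ Ci k := by
      intro k
      by_cases hk : k = i
      · subst hk; simpa [hds] using hd
      · simpa [hds, hk] using (Ci k).zero_mem
    have hc := hy (fun j => ∑ k, A (ds k j) * η k) ⟨ds, hmem, rfl⟩
    have key : ∑ i', A (∑ j, cs i' j * ds i' j) * η i' = 0 := by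
      rw [← pair cs ds, ← hc]
      exact Finset.sum_congr rfl fun j _ => by rw [hspec j]
    have h0 := indep _ key i
    simpa [hds] using h0
  · rintro ⟨cs, hcs, rfl⟩ c ⟨ds, hds, rfl⟩
    show ∑ j, (∑ i, A (cs i j) * η i) * (∑ i, A (ds i j) * η i) = 0
    rw [pair cs ds]
    have hz : ∀ i, (∑ j, cs i j * ds i j) = 0 := fun i => hcs i (ds i) (hds i)
    simp [hz]
end

section
/- A linear code C = C₁η₁ ⊕ ⋯ ⊕ C₅η₅ over R is self-orthogonal if and only if C₁, C₂, C₃, C₄, C₅ are all self-orthogonal codes over F_q. -/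
open Polynomial

set_option synthInstance.maxHeartbeats 1000000
set_option maxHeartbeats 1000000

lemma key_sum {F : Type*} [Field F] {n : ℕ} (η : Fin 5 → Rring F)
    (cs ds : Fin 5 → Fin n → F) :
    ∑ j, (∑ i, algebraMap F (Rring F) (cs i j) * η i) *
        (∑ i, algebraMap F (Rring F) (ds i j) * η i)
      = ∑ i, ∑ k, algebraMap F (Rring F) (∑ j, cs i j * ds k j) * (η i * η k) := by
  simp_rw [Finset.sum_mul_sum, map_sum, Finset.sum_mul, map_mul]
  rw [Finset.sum_comm]
  refine Finset.sum_congr rfl fun i _ => ?_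
  rw [Finset.sum_comm]
  refine Finset.sum_congr rfl fun k _ => Finset.sum_congr rfl fun j _ => ?_
  ring

/-- a linear code `C = C₁η₁ ⊕ ⋯ ⊕ C₅η₅` over `R` is self-orthogonal
if and only if `C₁,...,C₅` are all self-orthogonal codes over `F_q`. -/
theorem stmt12 (p r n : ℕ) (hp : p.Prime) (hodd : Odd p) (h4 : 4 ∣ (p - 1)) (hr : 0 < r)
    (F : Type*) [Field F] [Fintype F] (hcard : Fintype.card F = p ^ r)
    (η : Fin 5 → Rring F)
    (hne : ∀ i, η i ≠ 0) (hidem : ∀ i, η i ^ 2 = η i)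
    (horth : ∀ i j, i ≠ j → η i * η j = 0) (hsum : ∑ i, η i = 1)
    (hcrt : ∀ s : Rring F, ∃ b : Fin 5 → F,
      s = ∑ i, algebraMap F (Rring F) (b i) * η i)
    (Ci : Fin 5 → Submodule F (Fin n → F))
    (Ccode : Set (Fin n → Rring F))
    (hCcode : Ccode = {x | ∃ cs : Fin 5 → (Fin n → F), (∀ i, cs i ∈ Ci i) ∧
      x = fun j => ∑ i, algebraMap F (Rring F) (cs i j) * η i}) :
    (∀ x ∈ Ccode, ∀ y ∈ Ccode, ∑ j, x j * y j = 0) ↔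
      (∀ i : Fin 5, ∀ c ∈ Ci i, ∀ d ∈ Ci i, ∑ j, c j * d j = 0) := by
  constructor
  · intro h i c hc d hd
    set cs : Fin 5 → Fin n → F := fun k => if k = i then c else 0 with hcs
    set ds : Fin 5 → Fin n → F := fun k => if k = i then d else 0 with hds
    have hmem : ∀ (e : Fin n → F), e ∈ Ci i →
        (fun j => ∑ k, algebraMap F (Rring F) ((if k = i then e else 0 : Fin n → F) j) * η k)
          ∈ Ccode := by
      intro e he
      rw [hCcode]
      exact ⟨fun k => if k = i then e else 0, fun k => by
        by_cases hk : k = i <;> simp [hk, he, Submodule.zero_mem], rfl⟩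
    have h0 := h _ (hmem c hc) _ (hmem d hd)
    rw [key_sum] at h0
    have hsimp : ∀ k l : Fin 5,
        algebraMap F (Rring F)
            (∑ j, (if k = i then c else 0 : Fin n → F) j *
              (if l = i then d else 0 : Fin n → F) j) * (η k * η l)
          = if k = i ∧ l = i then algebraMap F (Rring F) (∑ j, c j * d j) * η i else 0 := by
      intro k l
      by_cases hk : k = i
      · by_cases hl : l = i
        · subst hk; subst hl; simp [← sq, hidem]
        · simp [hk, hl]
      · simp [hk]
    simp_rw [hsimp] at h0
    rw [Finset.sum_eq_single i (fun b _ hb => Finset.sum_eq_zero fun l _ => by simp [hb])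
      (by simp)] at h0
    rw [Finset.sum_eq_single i (fun b _ hb => by simp [hb]) (by simp)] at h0
    simp only [and_self, if_true] at h0
    by_contra hne0
    have : η i = 0 := by
      have h1 : algebraMap F (Rring F) (∑ j, c j * d j)⁻¹ *
          (algebraMap F (Rring F) (∑ j, c j * d j) * η i) = η i := by
        rw [← mul_assoc, ← map_mul, inv_mul_cancel₀ hne0, map_one, one_mul]
      rw [h0, mul_zero] at h1
      exact h1.symm
    exact hne i this
  · intro h x hx y hy
    rw [hCcode] at hx hy
    obtain ⟨cs, hcsm, rfl⟩ := hx
    obtain ⟨ds, hdsm, rfl⟩ := hy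
    rw [key_sum]
    refine Finset.sum_eq_zero fun i _ => Finset.sum_eq_zero fun k _ => ?_
    by_cases hik : i = k
    · subst hik
      rw [h i _ (hcsm i) _ (hdsm i), map_zero, zero_mul]
    · rw [horth i k hik, mul_zero]
end

section
/- A linear code C = C₁η₁ ⊕ C₂η₂ ⊕ C₃η₃ ⊕ C₄η₄ ⊕ C₅η₅ over R is cyclic (invariant under the cyclic shift T) if and only if each component code Cᵢ is a cyclic code over F_q. -/
open Polynomial

set_option synthInstance.maxHeartbeats 1000000
set_option maxHeartbeats 1000000

/-- The cyclic shift `T(c₀,...,c_{n-1}) = (c_{n-1},c₀,...,c_{n-2})`. -/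
def cyclicShift {α : Type*} {n : ℕ} [NeZero n] (c : Fin n → α) : Fin n → α :=
  fun j => c (j - 1)

lemma uniq_decomp {F : Type*} [Field F] (η : Fin 5 → Rring F)
    (hne : ∀ i, η i ≠ 0) (hidem : ∀ i, η i ^ 2 = η i)
    (horth : ∀ i j, i ≠ j → η i * η j = 0) (a b : Fin 5 → F)
    (h : ∑ i, algebraMap F (Rring F) (a i) * η i
        = ∑ i, algebraMap F (Rring F) (b i) * η i) : a = b := by
  funext k
  have key : ∀ c : Fin 5 → F,
      (∑ i, algebraMap F (Rring F) (c i) * η i) * η k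
        = algebraMap F (Rring F) (c k) * η k := by
    intro c
    rw [Finset.sum_mul, Finset.sum_eq_single k]
    · rw [mul_assoc, ← pow_two, hidem]
    · intro i _ hik
      rw [mul_assoc, horth i k hik, mul_zero]
    · intro hk; exact absurd (Finset.mem_univ k) hk
  have h2 : algebraMap F (Rring F) (a k) * η k = algebraMap F (Rring F) (b k) * η k := by
    rw [← key a, h, key b]
  by_contra hab
  have hu : IsUnit (algebraMap F (Rring F) (a k - b k)) :=
    (isUnit_iff_ne_zero.mpr (sub_ne_zero.mpr hab)).map (algebraMap F (Rring F))
  have hz : algebraMap F (Rring F) (a k - b k) * η k = 0 := by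
    rw [map_sub, sub_mul, h2, sub_self]
  exact hne k ((hu.mul_right_eq_zero).mp hz)

/-- a linear code `C = C₁η₁ ⊕ ⋯ ⊕ C₅η₅` over `R` is cyclic
(`T(C) = C`) if and only if each component code `Cᵢ` is cyclic over `F_q`. -/
theorem stmt13 (p r n : ℕ) [NeZero n] (hp : p.Prime) (hodd : Odd p) (h4 : 4 ∣ (p - 1))
    (hr : 0 < r)
    (F : Type*) [Field F] [Fintype F] (hcard : Fintype.card F = p ^ r)
    (η : Fin 5 → Rring F)
    (hne : ∀ i, η i ≠ 0) (hidem : ∀ i, η i ^ 2 = η i)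
    (horth : ∀ i j, i ≠ j → η i * η j = 0) (hsum : ∑ i, η i = 1)
    (hcrt : ∀ s : Rring F, ∃ b : Fin 5 → F,
      s = ∑ i, algebraMap F (Rring F) (b i) * η i)
    (Ci : Fin 5 → Submodule F (Fin n → F))
    (Ccode : Set (Fin n → Rring F))
    (hCcode : Ccode = {x | ∃ cs : Fin 5 → (Fin n → F), (∀ i, cs i ∈ Ci i) ∧
      x = fun j => ∑ i, algebraMap F (Rring F) (cs i j) * η i}) :
    cyclicShift '' Ccode = Ccode ↔
      ∀ i : Fin 5, cyclicShift '' (Ci i : Set (Fin n → F)) = (Ci i : Set (Fin n → F)) := by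
  subst hCcode
  have uniq := uniq_decomp η hne hidem horth
  constructor
  · intro h k
    apply Set.eq_of_subset_of_subset
    · rintro _ ⟨c, hc, rfl⟩
      -- build the codeword with c in component k, 0 elsewhere
      set cs : Fin 5 → (Fin n → F) := fun i => if i = k then c else 0 with hcs
      have hcsm : ∀ i, cs i ∈ Ci i := by
        intro i; by_cases hik : i = k
        · subst hik; simpa [hcs] using hc
        · simpa [hcs, hik] using (Ci i).zero_mem
      have hx : (fun j => ∑ i, algebraMap F (Rring F) (cs i j) * η i)
          ∈ {x | ∃ cs : Fin 5 → (Fin n → F), (∀ i, cs i ∈ Ci i) ∧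
            x = fun j => ∑ i, algebraMap F (Rring F) (cs i j) * η i} := ⟨cs, hcsm, rfl⟩
      have hTx : cyclicShift (fun j => ∑ i, algebraMap F (Rring F) (cs i j) * η i)
          ∈ {x | ∃ cs : Fin 5 → (Fin n → F), (∀ i, cs i ∈ Ci i) ∧
            x = fun j => ∑ i, algebraMap F (Rring F) (cs i j) * η i} := by
        rw [← h]; exact ⟨_, hx, rfl⟩
      obtain ⟨ds, hds, heq⟩ := hTx
      have hptw : ∀ j : Fin n, (fun i => ds i j) = fun i => cs i (j - 1) := by
        intro j
        apply uniq
        have := congrFun heq j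
        simp only [cyclicShift] at this
        exact this.symm
      have : cyclicShift c = ds k := by
        funext j
        have := congrFun (hptw j) k
        simp only [hcs, if_pos rfl] at this
        exact this.symm
      rw [this]; exact hds k
    · intro c hc
      set cs : Fin 5 → (Fin n → F) := fun i => if i = k then c else 0 with hcs
      have hcsm : ∀ i, cs i ∈ Ci i := by
        intro i; by_cases hik : i = k
        · subst hik; simpa [hcs] using hc
        · simpa [hcs, hik] using (Ci i).zero_mem
      have hx : (fun j => ∑ i, algebraMap F (Rring F) (cs i j) * η i)
          ∈ cyclicShift '' {x | ∃ cs : Fin 5 → (Fin n → F), (∀ i, cs i ∈ Ci i) ∧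
            x = fun j => ∑ i, algebraMap F (Rring F) (cs i j) * η i} := by
        rw [h]; exact ⟨cs, hcsm, rfl⟩
      obtain ⟨y, ⟨es, hes, rfl⟩, heq⟩ := hx
      refine ⟨es k, hes k, ?_⟩
      funext j
      have hj := congrFun heq j
      simp only [cyclicShift] at hj
      have := congrFun (uniq (fun i => es i (j - 1)) (fun i => cs i j) hj) k
      show es k (j - 1) = c j
      simpa [hcs] using this
  · intro h
    apply Set.eq_of_subset_of_subset
    · rintro _ ⟨x, ⟨cs, hcs, rfl⟩, rfl⟩
      refine ⟨fun i => cyclicShift (cs i), fun i => ?_, rfl⟩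
      have : cyclicShift (cs i) ∈ cyclicShift '' (Ci i : Set (Fin n → F)) :=
        ⟨cs i, hcs i, rfl⟩
      rwa [h i] at this
    · rintro _ ⟨cs, hcs, rfl⟩
      have hd : ∀ i, ∃ d, d ∈ Ci i ∧ cyclicShift d = cs i := by
        intro i
        have : cs i ∈ cyclicShift '' (Ci i : Set (Fin n → F)) := by rw [h i]; exact hcs i
        obtain ⟨d, hd1, hd2⟩ := this
        exact ⟨d, hd1, hd2⟩
      choose d hd1 hd2 using hd
      refine ⟨fun j => ∑ i, algebraMap F (Rring F) (d i j) * η i, ⟨d, hd1, rfl⟩, ?_⟩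
      funext j
      simp only [cyclicShift]
      congr 1
      funext i
      rw [show d i (j - 1) = cyclicShift (d i) j from rfl, hd2]
end

section
/- Let C = C₁η₁ ⊕ ⋯ ⊕ C₅η₅ be a cyclic code of length n over R, with gᵢ(x) the generator polynomial of the cyclic code Cᵢ over F_q. Then C = ⟨g(x)⟩ in R[x]/⟨xⁿ-1⟩, where g(x) = η₁g₁(x) + η₂g₂(x) + η₃g₃(x) + η₄g₄(x) + η₅g₅(x), this g is unique with these properties, and g(x) divides xⁿ - 1 in R[x]. -/
open Polynomial

set_option synthInstance.maxHeartbeats 1000000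
set_option maxHeartbeats 1000000

noncomputable instance Rring.instCommRing (F : Type*) [Field F] : CommRing (Rring F) :=
  Ideal.Quotient.commRing _

/-! Multiplication of `∑ eᵢ aᵢ` by `∑ eᵢ bᵢ` for orthogonal idempotents `eᵢ` is componentwise, so
`g = ∑ ηᵢ gᵢ` divides `∑ ηᵢ cᵢ` whenever each `gᵢ ∣ cᵢ`, with quotient `∑ ηᵢ (cᵢ / gᵢ)`. Every
codeword of `C` has this shape, and so does `xⁿ - 1 = ∑ ηᵢ (xⁿ - 1)` since `∑ ηᵢ = 1`. Uniqueness
holds because a monic generator of an ideal of `F_q[x]` is unique. -/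

namespace OrthogonalIdempotents

variable {S ι : Type*} [CommSemiring S] [Fintype ι] {e : ι → S}

lemma sum_mul_mul_sum_mul (he : OrthogonalIdempotents e) (a b : ι → S) :
    (∑ i, e i * a i) * (∑ i, e i * b i) = ∑ i, e i * (a i * b i) := by
  classical
  simp only [Finset.sum_mul_sum, mul_mul_mul_comm _ (a _), he.mul_eq, ite_mul, zero_mul,
    Finset.sum_ite_eq, Finset.mem_univ, if_true]

lemma sum_mul_dvd_sum_mul (he : OrthogonalIdempotents e) {a b : ι → S} (hab : ∀ i, a i ∣ b i) :
    ∑ i, e i * a i ∣ ∑ i, e i * b i := by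
  choose d hd using hab
  exact ⟨∑ i, e i * d i, by rw [he.sum_mul_mul_sum_mul]; simp only [hd]⟩

end OrthogonalIdempotents

lemma CompleteOrthogonalIdempotents.sum_mul_const {S ι : Type*} [CommSemiring S] [Fintype ι]
    {e : ι → S} (he : CompleteOrthogonalIdempotents e) (b : S) : ∑ i, e i * b = b := by
  rw [← Finset.sum_mul, he.complete, one_mul]

lemma Polynomial.Monic.eq_of_forall_dvd_iff {R : Type*} [CommRing R] [IsDomain R] {p q : R[X]}
    (hp : p.Monic) (hq : q.Monic) (hpq : ∀ c, p ∣ c ↔ q ∣ c) : p = q :=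
  eq_of_monic_of_associated hp hq
    (associated_of_dvd_dvd ((hpq q).mpr dvd_rfl) ((hpq p).mp dvd_rfl))

theorem stmt14_general (n : ℕ) (F : Type*) [Field F] (η : Fin 5 → Rring F) (hidem : ∀ i, η i ^ 2 = η i)
    (horth : ∀ i j, i ≠ j → η i * η j = 0) (hsum : ∑ i, η i = 1)
    (g : Fin 5 → F[X])
    (hgmonic : ∀ i, (g i).Monic) (hgdvd : ∀ i, g i ∣ (X : F[X]) ^ n - 1)
    (Cc : Ideal ((Rring F)[X] ⧸ Ideal.span {(X : (Rring F)[X]) ^ n - 1}))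
    (hC : ∀ a, a ∈ Cc ↔ ∃ c : Fin 5 → F[X], (∀ i, g i ∣ c i) ∧
      a = Ideal.Quotient.mk (Ideal.span {(X : (Rring F)[X]) ^ n - 1})
            (∑ i, Polynomial.C (η i) * (c i).map (algebraMap F (Rring F)))) :
    Cc = Ideal.span {Ideal.Quotient.mk (Ideal.span {(X : (Rring F)[X]) ^ n - 1})
          (∑ i, Polynomial.C (η i) * (g i).map (algebraMap F (Rring F)))} ∧
    (∑ i, Polynomial.C (η i) * (g i).map (algebraMap F (Rring F))) ∣
        ((X : (Rring F)[X]) ^ n - 1) ∧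
    (∀ g' : Fin 5 → F[X],
      (∀ i, (g' i).Monic ∧ g' i ∣ (X : F[X]) ^ n - 1 ∧ ∀ c : F[X], (g i ∣ c ↔ g' i ∣ c)) →
      (∑ i, Polynomial.C (η i) * (g' i).map (algebraMap F (Rring F))) =
        ∑ i, Polynomial.C (η i) * (g i).map (algebraMap F (Rring F))) := by
  have hη : CompleteOrthogonalIdempotents (Polynomial.C ∘ η) :=
    .map C ⟨⟨fun i ↦ (sq _).symm.trans (hidem i), fun i j ↦ horth i j⟩, hsum⟩
  refine ⟨le_antisymm ?_ ?_, ?_, ?_⟩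
  · intro a ha
    obtain ⟨c, hc, rfl⟩ := (hC a).mp ha
    exact (Ideal.mem_span_singleton (α := _ ⧸ Ideal.span {(X : (Rring F)[X]) ^ n - 1})).mpr
      (map_dvd (Ideal.Quotient.mk _) (hη.sum_mul_dvd_sum_mul fun i ↦ Polynomial.map_dvd _ (hc i)))
  · exact (Ideal.span_singleton_le_iff_mem _).mpr ((hC _).mpr ⟨g, fun _ ↦ dvd_rfl, rfl⟩)
  · have hdvd := hη.sum_mul_dvd_sum_mul fun i ↦
      Polynomial.map_dvd (algebraMap F (Rring F)) (hgdvd i)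
    rwa [hη.sum_mul_const, Polynomial.map_sub, Polynomial.map_pow, map_X, Polynomial.map_one]
      at hdvd
  · intro g' hg'
    refine Finset.sum_congr rfl fun i _ ↦ ?_
    rw [(hg' i).1.eq_of_forall_dvd_iff (hgmonic i) fun c ↦ ((hg' i).2.2 c).symm]

/-- let `C = C₁η₁ ⊕ ⋯ ⊕ C₅η₅` be a cyclic code of length `n` over `R`,
viewed as an ideal of `R[x]/⟨xⁿ-1⟩`, with `gᵢ(x)` the (monic) generator polynomial of
the cyclic code `Cᵢ` over `F_q`. Then `C = ⟨g(x)⟩` where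
`g(x) = η₁g₁(x) + ⋯ + η₅g₅(x)`, this `g` is unique (it does not depend on the choice of
generator polynomials, which are unique), and `g(x)` divides `xⁿ - 1` in `R[x]`. -/
theorem stmt14 (p r n : ℕ) (hn : 0 < n) (hp : p.Prime) (hodd : Odd p)
    (h4 : 4 ∣ (p - 1)) (hr : 0 < r)
    (F : Type*) [Field F] [Fintype F] (hcard : Fintype.card F = p ^ r)
    (η : Fin 5 → Rring F)
    (hne : ∀ i, η i ≠ 0) (hidem : ∀ i, η i ^ 2 = η i)
    (horth : ∀ i j, i ≠ j → η i * η j = 0) (hsum : ∑ i, η i = 1)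
    (g : Fin 5 → F[X])
    (hgmonic : ∀ i, (g i).Monic) (hgdvd : ∀ i, g i ∣ (X : F[X]) ^ n - 1)
    (Cc : Ideal ((Rring F)[X] ⧸ Ideal.span {(X : (Rring F)[X]) ^ n - 1}))
    (hC : ∀ a, a ∈ Cc ↔ ∃ c : Fin 5 → F[X], (∀ i, g i ∣ c i) ∧
      a = Ideal.Quotient.mk (Ideal.span {(X : (Rring F)[X]) ^ n - 1})
            (∑ i, Polynomial.C (η i) * (c i).map (algebraMap F (Rring F)))) :
    Cc = Ideal.span {Ideal.Quotient.mk (Ideal.span {(X : (Rring F)[X]) ^ n - 1})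
          (∑ i, Polynomial.C (η i) * (g i).map (algebraMap F (Rring F)))} ∧
    (∑ i, Polynomial.C (η i) * (g i).map (algebraMap F (Rring F))) ∣
        ((X : (Rring F)[X]) ^ n - 1) ∧
    (∀ g' : Fin 5 → F[X],
      (∀ i, (g' i).Monic ∧ g' i ∣ (X : F[X]) ^ n - 1 ∧ ∀ c : F[X], (g i ∣ c ↔ g' i ∣ c)) →
      (∑ i, Polynomial.C (η i) * (g' i).map (algebraMap F (Rring F))) =
        ∑ i, Polynomial.C (η i) * (g i).map (algebraMap F (Rring F))) :=
  stmt14_general n F η hidem horth hsum g hgmonic hgdvd Cc hC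
end

section
/- Every ideal of the quotient ring R[x]/⟨xⁿ - 1⟩ is principal, where R = F_q[v]/⟨v^5 - v⟩ with q = p^r, p an odd prime, 4 | (p-1), and gcd considerations are unrestricted on n. -/
open Polynomial

set_option synthInstance.maxHeartbeats 1000000
set_option maxHeartbeats 1000000

/-- Transfer `IsPrincipalIdealRing` across a ring equivalence. -/
theorem aux_pir_of_equiv {R S : Type*} [CommRing R] [CommRing S]
    [IsPrincipalIdealRing R] (e : R ≃+* S) : IsPrincipalIdealRing S :=
  IsPrincipalIdealRing.of_surjective (e : R →+* S) e.surjective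

/-- A finite product of principal ideal rings is a principal ideal ring. -/
theorem aux_pi_pir {ι : Type*} [Finite ι] (R : ι → Type*) [∀ i, CommRing (R i)]
    [∀ i, IsPrincipalIdealRing (R i)] : IsPrincipalIdealRing (∀ i, R i) := by
  classical
  cases nonempty_fintype ι
  constructor
  intro I
  have hsurj : ∀ i, Function.Surjective (Pi.evalRingHom R i) := fun i x =>
    ⟨Pi.single i x, Pi.single_eq_same i x⟩
  have key : ∀ x : (∀ i, R i), (∀ i, x i ∈ I.map (Pi.evalRingHom R i)) → x ∈ I := by
    intro x hx
    have hxs : x = ∑ i, Pi.single i (x i) := (Finset.univ_sum_single x).symm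
    rw [hxs]
    refine Submodule.sum_mem _ fun i _ => ?_
    obtain ⟨y, hyI, hy⟩ := (Ideal.mem_map_iff_of_surjective _ (hsurj i)).mp (hx i)
    have h1 : Pi.single i (x i) = Pi.single i (1 : R i) * y := by
      funext j
      by_cases h : j = i
      · subst h
        simp only [Pi.single_eq_same, Pi.mul_apply, one_mul]
        exact hy.symm
      · simp [Pi.single_eq_of_ne h]
    rw [h1]
    exact I.mul_mem_left _ hyI
  refine ⟨⟨fun i => Submodule.IsPrincipal.generator (I.map (Pi.evalRingHom R i)), ?_⟩⟩
  apply le_antisymm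
  · intro x hx
    have hxi : ∀ i, ∃ c, c * Submodule.IsPrincipal.generator (I.map (Pi.evalRingHom R i)) = x i := by
      intro i
      have : x i ∈ I.map (Pi.evalRingHom R i) := Ideal.mem_map_of_mem _ hx
      rw [← Ideal.span_singleton_generator (I.map (Pi.evalRingHom R i))] at this
      exact Ideal.mem_span_singleton'.mp this
    choose c hc using hxi
    exact Ideal.mem_span_singleton'.mpr ⟨c, funext fun i => hc i⟩
  · rw [Submodule.span_le, Set.singleton_subset_iff]
    exact key _ fun i => Submodule.IsPrincipal.generator_mem _

noncomputable instance (F : Type*) [Field F] : CommRing (Rring F) :=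
  Ideal.Quotient.commRing _

/-- every ideal of `R[x]/⟨xⁿ - 1⟩` is principal, where
`R = F_q[v]/⟨v⁵ - v⟩`, `q = p^r`, `p` an odd prime with `4 ∣ (p-1)`,
with no restriction on `n`. -/
theorem stmt15 (p r n : ℕ) (hp : p.Prime) (hodd : Odd p) (h4 : 4 ∣ (p - 1)) (hr : 0 < r)
    (F : Type*) [Field F] [Fintype F] (hcard : Fintype.card F = p ^ r) :
    IsPrincipalIdealRing
      ((Rring F)[X] ⧸ Ideal.span {(X : (Rring F)[X]) ^ n - 1}) := by
  classical
  -- the characteristic of `F` is `p`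
  have hchar : CharP F (ringChar F) := ringChar.charP F
  obtain ⟨m, hqprime, hFq⟩ := FiniteField.card F (ringChar F)
  have hpq : p = ringChar F := by
    have hdvd : p ∣ ringChar F ^ (m : ℕ) := by
      rw [← hFq, hcard]
      exact dvd_pow_self p hr.ne'
    have := hp.dvd_of_dvd_pow hdvd
    exact ((Nat.prime_dvd_prime_iff_eq hp hqprime).mp this)
  have hcharp : CharP F p := hpq ▸ hchar
  have h2 : (2 : F) ≠ 0 := by
    intro h
    have hpd : p ∣ 2 := (CharP.cast_eq_zero_iff F p 2).mp h
    have hp2 : p = 2 := (Nat.prime_dvd_prime_iff_eq hp Nat.prime_two).mp hpd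
    rw [Nat.odd_iff, hp2] at hodd
    omega
  have hm1 : (-1 : F) ≠ 1 := by
    intro h
    apply h2
    linear_combination -h
  -- a square root of -1
  have hsq : IsSquare (-1 : F) := by
    have hp2le := hp.two_le
    have hpmod : p % 4 = 1 := by omega
    have hcard4 : Fintype.card F % 4 = 1 := by
      rw [hcard, Nat.pow_mod, hpmod, Nat.one_pow]
    rw [FiniteField.isSquare_neg_one_iff]
    omega
  obtain ⟨s, hs⟩ := hsq
  -- hs : -1 = s * s
  have hs0 : s ≠ 0 := by intro h; rw [h, mul_zero] at hs; exact one_ne_zero (α := F) (by linear_combination -hs)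
  have hs1 : s ≠ 1 := by intro h; rw [h, mul_one] at hs; exact hm1 hs
  have hsm1 : s ≠ -1 := by
    intro h; rw [h] at hs; apply hm1; linear_combination hs
  have hsns : s ≠ -s := by
    intro h
    apply hs0
    have : (2 : F) * s = 0 := by linear_combination h
    rcases mul_eq_zero.mp this with h' | h'
    · exact absurd h' h2
    · exact h'
  set a : Fin 5 → F := ![0, 1, -1, s, -s] with ha
  have hinj : ∀ j k : Fin 5, j ≠ k → a j ≠ a k := by
    intro j k hjk
    fin_cases j <;> fin_cases k <;> (try exact absurd rfl hjk) <;>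
      (simp only [ha]; norm_num) <;>
      first
        | exact absurd rfl hjk
        | exact fun h => hs0 (by linear_combination h)
        | exact fun h => hs0 (by linear_combination -h)
        | exact fun h => hs1 (by linear_combination h)
        | exact fun h => hs1 (by linear_combination -h)
        | exact fun h => hsm1 (by linear_combination h)
        | exact fun h => hsm1 (by linear_combination -h)
        | exact fun h => hsns (by linear_combination h)
        | exact fun h => hsns (by linear_combination -h)
        | exact fun h => hm1 (by linear_combination h)
        | exact fun h => hm1 (by linear_combination -h)
        | exact fun h => one_ne_zero (α := F) (by linear_combination h)
        | exact fun h => one_ne_zero (α := F) (by linear_combination -h)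
  -- notation
  set A := F[X]
  set B := A[X]
  set v5 : A := (X : A) ^ 5 - X with hv5def
  set g : Fin 5 → B := fun j => C ((X : A) - C (a j)) with hg
  -- factorization of v^5 - v
  have hCs : (C s : A) * C s = -1 := by
    rw [← C_mul, ← hs]; simp
  have hfact : v5 = ∏ j, ((X : A) - C (a j)) := by
    rw [Fin.prod_univ_five]
    simp only [ha, Matrix.cons_val_zero, Matrix.cons_val_one, Matrix.head_cons, Matrix.cons_val_two,
      Matrix.tail_cons, Matrix.cons_val_three, Matrix.cons_val_four, map_neg, map_one, map_zero]
    rw [hv5def]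
    linear_combination ((X : A) ^ 3 - X) * hCs
  -- ideals
  set I : Ideal A := Ideal.span {v5} with hI
  set Imap : Ideal B := I.map (C : A →+* B) with hImap
  set J : Ideal B := Ideal.span {(X : B) ^ n - 1} with hJ
  -- Step 1: (Rring F)[X] ≃+* B ⧸ Imap
  set e1 : (Rring F)[X] ≃+* B ⧸ Imap := Ideal.polynomialQuotientEquivQuotientPolynomial I
    with he1def
  have he1X : e1 (X : (Rring F)[X]) = Ideal.Quotient.mk Imap (X : B) := by
    rw [he1def]
    have := Ideal.polynomialQuotientEquivQuotientPolynomial_map_mk I (X : B)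
    rw [Polynomial.map_X] at this
    exact this
  -- Step 2: quotient transfer
  have hmapspan :
      (Ideal.span {(X : (Rring F)[X]) ^ n - 1}).map (e1 : (Rring F)[X] →+* B ⧸ Imap)
        = (J.map (Ideal.Quotient.mk Imap)) := by
    rw [Ideal.map_span, Ideal.map_span, Set.image_singleton, Set.image_singleton]
    congr 1
    rw [map_sub, map_pow, map_one]
    have he1X' : (e1 : (Rring F)[X] →+* B ⧸ Imap) (X : (Rring F)[X])
        = Ideal.Quotient.mk Imap (X : B) := he1X
    rw [he1X']
    simp
  have e2 : ((Rring F)[X] ⧸ Ideal.span {(X : (Rring F)[X]) ^ n - 1}) ≃+*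
      (B ⧸ Imap) ⧸ (J.map (Ideal.Quotient.mk Imap)) :=
    Ideal.quotientEquiv _ _ e1 hmapspan.symm
  -- Step 3: double quotient
  have e3 : ((B ⧸ Imap) ⧸ (J.map (Ideal.Quotient.mk Imap))) ≃+* B ⧸ (Imap ⊔ J) :=
    DoubleQuot.quotQuotEquivQuotSup Imap J
  have hsw : Imap ⊔ J = J ⊔ Imap := sup_comm _ _
  have e4 : (B ⧸ (Imap ⊔ J)) ≃+* ((B ⧸ J) ⧸ (Imap.map (Ideal.Quotient.mk J))) := by
    rw [hsw]
    exact (DoubleQuot.quotQuotEquivQuotSup J Imap).symm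
  -- now work in Q := B ⧸ J
  set Q := B ⧸ J
  letI : CommRing Q := Ideal.Quotient.commRing J
  set mk : B →+* Q := Ideal.Quotient.mk J with hmk
  -- pairwise coprime generators
  have hcop : ∀ j k : Fin 5, j ≠ k → IsCoprime (mk (g j)) (mk (g k)) := by
    intro j k hjk
    refine ⟨mk (C (C ((a k - a j)⁻¹))), -(mk (C (C ((a k - a j)⁻¹)))), ?_⟩
    have hone : (C (C ((a k - a j)⁻¹)) : B) * g j + (-(C (C ((a k - a j)⁻¹)) : B)) * g k = 1 := by
      rw [hg]
      have hne : a k - a j ≠ 0 := sub_ne_zero.mpr (hinj k j (Ne.symm hjk))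
      have : (C ((X : A) - C (a j)) : B) * C (C ((a k - a j)⁻¹))
          - C ((X : A) - C (a k)) * C (C ((a k - a j)⁻¹)) = 1 := by
        rw [← sub_mul, ← C_sub, ← C_mul]
        have h1 : ((X : A) - C (a j)) - ((X : A) - C (a k)) = C (a k - a j) := by
          rw [C_sub]; ring
        rw [h1, ← C_mul, mul_inv_cancel₀ hne, C_1, C_1]
      linear_combination this
    calc mk (C (C ((a k - a j)⁻¹))) * mk (g j) + (-(mk (C (C ((a k - a j)⁻¹))))) * mk (g k)
        = mk ((C (C ((a k - a j)⁻¹)) : B) * g j + (-(C (C ((a k - a j)⁻¹)) : B)) * g k) := by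
          rw [map_add, map_mul, map_mul, map_neg]
      _ = 1 := by rw [hone, map_one]
  -- identify the mapped ideal
  have hImap' : Imap.map mk = Ideal.span {mk (C v5)} := by
    rw [hImap, hI, Ideal.map_span, Set.image_singleton, Ideal.map_span, Set.image_singleton]
  have hCv5 : (C v5 : B) = ∏ j, g j := by
    rw [hfact, map_prod]
  have hIinf : Imap.map mk = ⨅ j, Ideal.span {mk (g j)} := by
    rw [hImap', hCv5, map_prod]
    exact (Ideal.iInf_span_singleton fun j k hjk => hcop j k hjk).symm
  -- CRT
  have e5 : (Q ⧸ Imap.map mk) ≃+* ∀ j : Fin 5, Q ⧸ Ideal.span {mk (g j)} := by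
    rw [hIinf]
    exact Ideal.quotientInfRingEquivPiQuotient _ fun j k hjk =>
      (Ideal.isCoprime_span_singleton_iff _ _).mpr (hcop j k hjk)
  -- each factor is a PIR
  have hfac : ∀ j : Fin 5, IsPrincipalIdealRing (Q ⧸ Ideal.span {mk (g j)}) := by
    intro j
    -- Q ⧸ span {mk (g j)} ≃ B ⧸ (J ⊔ span {g j})
    have hms : (Ideal.span {g j} : Ideal B).map mk = Ideal.span {mk (g j)} := by
      rw [Ideal.map_span, Set.image_singleton]
    have f1 : (Q ⧸ Ideal.span {mk (g j)}) ≃+* B ⧸ (J ⊔ Ideal.span {g j}) := by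
      rw [← hms]
      exact DoubleQuot.quotQuotEquivQuotSup J (Ideal.span {g j})
    have hsw2 : J ⊔ Ideal.span {g j} = Ideal.span {g j} ⊔ J := sup_comm _ _
    have f2 : (B ⧸ (J ⊔ Ideal.span {g j})) ≃+*
        ((B ⧸ Ideal.span {g j}) ⧸ J.map (Ideal.Quotient.mk (Ideal.span {g j}))) := by
      rw [hsw2]
      exact (DoubleQuot.quotQuotEquivQuotSup (Ideal.span {g j}) J).symm
    -- B ⧸ span {g j} ≃ (A ⧸ span {X - C (a j)})[X] ≃ F[X]
    have hspan : (Ideal.span {g j} : Ideal B) =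
        (Ideal.span {(X : A) - C (a j)}).map (C : A →+* B) := by
      rw [Ideal.map_span, Set.image_singleton, hg]
    have f3 : (B ⧸ Ideal.span {g j}) ≃+* (A ⧸ Ideal.span {(X : A) - C (a j)})[X] := by
      rw [hspan]
      exact (Ideal.polynomialQuotientEquivQuotientPolynomial _).symm
    have f4 : (A ⧸ Ideal.span {(X : A) - C (a j)})[X] ≃+* F[X] :=
      Polynomial.mapEquiv (Polynomial.quotientSpanXSubCAlgEquiv (a j)).toRingEquiv
    haveI : IsPrincipalIdealRing (B ⧸ Ideal.span {g j}) :=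
      aux_pir_of_equiv (S := B ⧸ Ideal.span {g j}) (f4.symm.trans f3.symm)
    haveI : IsPrincipalIdealRing
        ((B ⧸ Ideal.span {g j}) ⧸ J.map (Ideal.Quotient.mk (Ideal.span {g j}))) :=
      IsPrincipalIdealRing.of_surjective (Ideal.Quotient.mk _) Ideal.Quotient.mk_surjective
    exact IsPrincipalIdealRing.of_surjective (f1.trans (f2.trans (RingEquiv.refl _))).symm
      (f1.trans (f2.trans (RingEquiv.refl _))).symm.surjective
  haveI : ∀ j : Fin 5, IsPrincipalIdealRing (Q ⧸ Ideal.span {mk (g j)}) := hfac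
  haveI : IsPrincipalIdealRing (∀ j : Fin 5, Q ⧸ Ideal.span {mk (g j)}) :=
    aux_pi_pir _
  exact aux_pir_of_equiv (S := (Rring F)[X] ⧸ Ideal.span {(X : (Rring F)[X]) ^ n - 1}) (e2.trans (e3.trans (e4.trans e5))).symm
end

section
/- Let C = C₁η₁ ⊕ ⋯ ⊕ C₅η₅ be a cyclic code of length n over R with C = ⟨g(x)⟩ and component generators g₁,...,g₅. Then C⊥ ⊆ C if and only if for every i ∈ {1,...,5}, xⁿ - 1 ≡ 0 (mod gᵢ(x)·gᵢ*(x)). -/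
open Polynomial

/-!
The idempotents identify `R` with `F⁵` as rings, so a code over `R` and its dual split into
five codes over `F` and their duals, and `C⊥ ⊆ C` holds iff it holds componentwise.

For a cyclic code `⟨g⟩` of length `n` with `xⁿ - 1 = g h`, the pairing `y · c` is the
coefficient of `x^{n-1}` in `ŷ c`, where `ŷ` is the reflection of `y`. Testing against the
codewords `x^k g` shows that `y ∈ C⊥` iff `h ∣ ŷ`: if `r = ŷ mod h` were nonzero, the leading
term of `r g` would survive in one of these pairings. Hence `C⊥ ⊆ C` iff `g ∣ h*`, and since
`g* h* = -(xⁿ - 1)` this is `g g* ∣ xⁿ - 1`.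
-/

section Codes

variable {R S ι m : Type*}

/-- The direct sum of the codes `C i`: this is `C₁η₁ ⊕ ⋯ ⊕ C₅η₅` once `R ≅ F⁵`. -/
def piCode (C : ι → Set (m → R)) : Set (m → ι → R) :=
  {x | ∀ i, (fun j => x j i) ∈ C i}

theorem single_mem_piCode [Zero R] [DecidableEq ι] {C : ι → Set (m → R)} (h0 : ∀ i, 0 ∈ C i)
    {i : ι} {c : m → R} (hc : c ∈ C i) : (fun j => Pi.single i (c j)) ∈ piCode C := by
  intro k
  by_cases hk : k = i
  · subst hk
    simpa using hc
  · simp only [Pi.single_apply, hk, if_false]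
    exact h0 k

theorem piCode_subset_piCode_iff [Zero R] [DecidableEq ι] {C D : ι → Set (m → R)}
    (h0 : ∀ i, 0 ∈ C i) : piCode C ⊆ piCode D ↔ ∀ i, C i ⊆ D i := by
  refine ⟨fun h i c hc => ?_, fun h x hx i => h i (hx i)⟩
  simpa using h (single_mem_piCode h0 hc) i

variable [Fintype m]

def dualCode [Semiring R] (C : Set (m → R)) : Set (m → R) :=
  {y | ∀ c ∈ C, y ⬝ᵥ c = 0}

theorem zero_mem_dualCode [Semiring R] (C : Set (m → R)) : 0 ∈ dualCode C :=
  fun c _ => zero_dotProduct c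

theorem dualCode_preimage_comp [Semiring R] [Semiring S] (E : R ≃+* S) (C : Set (m → S)) :
    dualCode ((E ∘ ·) ⁻¹' C) = (E ∘ ·) ⁻¹' dualCode C := by
  ext y
  constructor
  · intro hy d hd
    have hyd := hy (E.symm ∘ d) (by simpa [Set.mem_preimage, Function.comp_def] using hd)
    calc (E ∘ y) ⬝ᵥ d = E (y ⬝ᵥ (E.symm ∘ d)) := by
          simpa [Function.comp_def] using (RingHom.map_dotProduct (E : R →+* S) y (E.symm ∘ d)).symm
      _ = 0 := by rw [hyd, map_zero]
  · intro hy c hc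
    rw [← map_eq_zero_iff E E.injective]
    exact (RingHom.map_dotProduct (E : R →+* S) y c).trans (hy _ hc)

theorem dualCode_preimage_comp_subset_iff [Semiring R] [Semiring S] (E : R ≃+* S)
    (C : Set (m → S)) :
    dualCode ((E ∘ ·) ⁻¹' C) ⊆ (E ∘ ·) ⁻¹' C ↔ dualCode C ⊆ C := by
  rw [dualCode_preimage_comp, Set.preimage_subset_preimage_iff]
  rw [E.surjective.comp_left.range_eq]
  exact Set.subset_univ _

theorem dotProduct_apply [Semiring R] [Fintype ι] (y c : m → ι → R) (i : ι) :
    (y ⬝ᵥ c) i = (fun j => y j i) ⬝ᵥ fun j => c j i := by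
  simp [dotProduct, Finset.sum_apply]

theorem dualCode_piCode [Semiring R] [Fintype ι] [DecidableEq ι] {C : ι → Set (m → R)}
    (h0 : ∀ i, 0 ∈ C i) : dualCode (piCode C) = piCode fun i => dualCode (C i) := by
  ext y
  refine ⟨fun hy i c hc => ?_, fun hy c hc => funext fun i => ?_⟩
  · have := congrFun (hy _ (single_mem_piCode h0 hc)) i
    simpa [dotProduct_apply] using this
  · rw [dotProduct_apply]
    exact hy i _ (hc i)

end Codes

namespace Polynomial

variable {R : Type*}

theorem ofFn_eq_sum_C_mul_X_pow [Semiring R] [DecidableEq R] {n : ℕ} (v : Fin n → R) :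
    ofFn n v = ∑ j, C (v j) * X ^ (j : ℕ) := by
  simp only [ofFn_eq_sum_monomial, C_mul_X_pow_eq_monomial]

theorem reflect_mul_eq_reverse_mul_reflect [Semiring R] [NoZeroDivisors R] {f g : R[X]}
    {N : ℕ} (hfg : (f * g).natDegree ≤ N) :
    reflect N (f * g) = f.reverse * reflect (N - f.natDegree) g := by
  rcases eq_or_ne f 0 with rfl | hf
  · simp
  rcases eq_or_ne g 0 with rfl | hg
  · simp
  rw [natDegree_mul hf hg] at hfg
  conv_lhs => rw [show N = f.natDegree + (N - f.natDegree) by omega]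
  rw [reflect_mul f g le_rfl (by omega), reverse]

variable [CommRing R]

theorem isCoprime_X_pow_of_dvd_X_pow_sub_one {n : ℕ} (hn : 0 < n) {g : R[X]}
    (hg : g ∣ X ^ n - 1) (k : ℕ) : IsCoprime g (X ^ k) := by
  refine IsCoprime.pow_right (IsCoprime.of_isCoprime_of_dvd_left ?_ hg)
  exact ⟨-1, X ^ (n - 1), by rw [← pow_succ, Nat.sub_add_cancel hn]; ring⟩

variable [Nontrivial R]

theorem X_pow_sub_one_ne_zero {n : ℕ} (hn : 0 < n) : (X : R[X]) ^ n - 1 ≠ 0 := by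
  simpa using X_pow_sub_C_ne_zero hn (1 : R)

theorem reverse_X_pow_sub_one (n : ℕ) : ((X : R[X]) ^ n - 1).reverse = 1 - X ^ n := by
  rw [reverse, ← C_1, natDegree_X_pow_sub_C, C_1, reflect_sub, reflect_monomial, reflect_one,
    revAt_le le_rfl, Nat.sub_self, pow_zero]

theorem coeff_pred_eq_zero_of_X_pow_sub_one_dvd [NoZeroDivisors R] {n : ℕ} {p : R[X]}
    (hdvd : X ^ n - 1 ∣ p) (hp : p.natDegree ≤ 2 * (n - 1)) : p.coeff (n - 1) = 0 := by
  obtain ⟨q, rfl⟩ := hdvd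
  rcases Nat.eq_zero_or_pos n with rfl | hn
  · simp
  rcases eq_or_ne q 0 with rfl | hq
  · simp
  rw [natDegree_mul (X_pow_sub_one_ne_zero hn) hq, ← C_1, natDegree_X_pow_sub_C] at hp
  rw [sub_mul, one_mul, coeff_sub, coeff_X_pow_mul', if_neg (by omega),
    coeff_eq_zero_of_natDegree_lt (by omega), sub_zero]

end Polynomial

section CyclicCode

variable {F : Type*} [Field F] {n : ℕ} {g h : F[X]}

theorem natDegree_add_natDegree_of_X_pow_sub_one_eq_mul (hn : 0 < n)
    (hgh : X ^ n - 1 = g * h) : g.natDegree + h.natDegree = n := by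
  obtain ⟨hg, hh⟩ := mul_ne_zero_iff.mp (hgh ▸ X_pow_sub_one_ne_zero hn)
  rw [← natDegree_mul hg hh, ← hgh, ← C_1, natDegree_X_pow_sub_C]

theorem dvd_of_forall_coeff_pred_mul_eq_zero (hn : 0 < n) (hgh : X ^ n - 1 = g * h)
    {p : F[X]} (hp : p.natDegree < n)
    (H : ∀ k, k + g.natDegree < n → (p * (X ^ k * g)).coeff (n - 1) = 0) : h ∣ p := by
  obtain ⟨hg, hh⟩ := mul_ne_zero_iff.mp (hgh ▸ X_pow_sub_one_ne_zero hn)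
  have hdeg := natDegree_add_natDegree_of_X_pow_sub_one_eq_mul hn hgh
  rw [← EuclideanDomain.mod_eq_zero]
  by_contra hr
  set q := p / h
  set r := p % h
  have hpqr : p = h * q + r := (EuclideanDomain.div_add_mod p h).symm
  have hrh : r.natDegree < h.natDegree := natDegree_lt_natDegree hr (degree_mod_lt p hh)
  have hq : q.coeff (r.natDegree + g.natDegree) = 0 := by
    rcases eq_or_ne q 0 with hq | hq
    · simp [hq]
    have : (h * q).natDegree < n := by
      rw [show h * q = p - r by rw [hpqr]; ring]
      exact (natDegree_sub_le p r).trans_lt (max_lt hp (by omega))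
    rw [natDegree_mul hh hq] at this
    exact coeff_eq_zero_of_natDegree_lt (by omega)
  -- pairing with the codeword `x^k g` picks out the leading coefficient of `r g`
  set k := h.natDegree - 1 - r.natDegree
  have hpk : p * (X ^ k * g) = X ^ k * (X ^ n * q - q + r * g) := by
    rw [hpqr]; linear_combination -(X ^ k * q) * hgh
  have hlead := H k (by omega)
  rw [hpk, coeff_X_pow_mul', if_pos (by omega),
    show n - 1 - k = r.natDegree + g.natDegree by omega, coeff_add, coeff_sub, coeff_X_pow_mul',
    if_neg (by omega), hq, coeff_mul_degree_add_degree, zero_sub, neg_zero, zero_add] at hlead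
  exact mul_ne_zero (leadingCoeff_ne_zero.2 hr) (leadingCoeff_ne_zero.2 hg) hlead

theorem dvd_reverse_iff_mul_reverse_dvd (hn : 0 < n) (hgh : X ^ n - 1 = g * h) :
    g ∣ h.reverse ↔ g * g.reverse ∣ X ^ n - 1 := by
  have hg : g.reverse ≠ 0 :=
    reverse_eq_zero.not.2 (mul_ne_zero_iff.mp (hgh ▸ X_pow_sub_one_ne_zero hn)).1
  have hrev : h.reverse * g.reverse = -(X ^ n - 1) := by
    rw [mul_comm, ← reverse_mul_of_domain, ← hgh, reverse_X_pow_sub_one, neg_sub]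
  rw [← mul_dvd_mul_iff_right hg, hrev, dvd_neg]

variable [DecidableEq F]

def cyclicCode (g : F[X]) (n : ℕ) : Set (Fin n → F) :=
  {c | g ∣ ofFn n c}

theorem zero_mem_cyclicCode (g : F[X]) (n : ℕ) : 0 ∈ cyclicCode g n := by
  simp [cyclicCode]

theorem dotProduct_eq_coeff_reflect_mul_ofFn (y c : Fin n → F) :
    y ⬝ᵥ c = (reflect (n - 1) (ofFn n y) * ofFn n c).coeff (n - 1) := by
  cases n with
  | zero => simp [ofFn_zero']
  | succ m =>
    set P := ofFn (m + 1) y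
    set Q := ofFn (m + 1) c
    have hdot : y ⬝ᵥ c = ∑ k ∈ Finset.range (m + 1), P.coeff k * Q.coeff k := by
      rw [← Fin.sum_univ_eq_sum_range (fun k => P.coeff k * Q.coeff k)]
      exact Finset.sum_congr rfl fun j _ => by
        rw [ofFn_coeff_eq_val_of_lt _ j.isLt, ofFn_coeff_eq_val_of_lt _ j.isLt]
    rw [hdot, ← Finset.sum_range_reflect, Nat.add_sub_cancel, coeff_mul,
      Finset.Nat.sum_antidiagonal_eq_sum_range_succ (fun i j => (reflect m P).coeff i * Q.coeff j)]
    refine Finset.sum_congr rfl fun i hi => ?_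
    rw [coeff_reflect, revAt_le (by simpa [Nat.lt_succ_iff] using hi)]

theorem natDegree_ofFn_le (y : Fin n → F) : (ofFn n y).natDegree ≤ n - 1 := by
  rcases Nat.eq_zero_or_pos n with rfl | hn
  · simp [ofFn_zero']
  · exact Nat.le_sub_one_of_lt (ofFn_natDegree_lt hn y)

theorem natDegree_reflect_ofFn_le (y : Fin n → F) :
    (reflect (n - 1) (ofFn n y)).natDegree ≤ n - 1 :=
  natDegree_reflect_le.trans (max_le le_rfl (natDegree_ofFn_le y))

theorem mem_dualCode_cyclicCode_iff (hn : 0 < n) (hgh : X ^ n - 1 = g * h) (y : Fin n → F) :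
    y ∈ dualCode (cyclicCode g n) ↔ h ∣ reflect (n - 1) (ofFn n y) := by
  have hy := natDegree_reflect_ofFn_le y
  constructor
  · intro hdual
    refine dvd_of_forall_coeff_pred_mul_eq_zero hn hgh (by omega) fun k hk => ?_
    have hdeg : (X ^ k * g).natDegree < n := by
      rwa [natDegree_X_pow_mul k (mul_ne_zero_iff.mp (hgh ▸ X_pow_sub_one_ne_zero hn)).1,
        add_comm]
    have hmem : toFn n (X ^ k * g) ∈ cyclicCode g n := by
      show g ∣ _
      rw [ofFn_comp_toFn_eq_id_of_natDegree_lt hdeg]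
      exact dvd_mul_left g _
    have := hdual _ hmem
    rwa [dotProduct_eq_coeff_reflect_mul_ofFn, ofFn_comp_toFn_eq_id_of_natDegree_lt hdeg] at this
  · rintro ⟨b, hb⟩ c ⟨u, hu⟩
    rw [dotProduct_eq_coeff_reflect_mul_ofFn]
    refine coeff_pred_eq_zero_of_X_pow_sub_one_dvd ⟨b * u, by rw [hb, hu, hgh]; ring⟩ ?_
    exact natDegree_mul_le.trans (by have := natDegree_ofFn_le c; omega)

theorem dualCode_cyclicCode_subset_iff_dvd_reverse (hn : 0 < n) (hgh : X ^ n - 1 = g * h) :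
    dualCode (cyclicCode g n) ⊆ cyclicCode g n ↔ g ∣ h.reverse := by
  have hdeg := natDegree_add_natDegree_of_X_pow_sub_one_eq_mul hn hgh
  simp only [Set.subset_def, mem_dualCode_cyclicCode_iff hn hgh]
  constructor
  · intro H
    rcases Nat.eq_zero_or_pos g.natDegree with hg | hg
    · have hg0 := (mul_ne_zero_iff.mp (hgh ▸ X_pow_sub_one_ne_zero hn)).1
      exact (isUnit_iff_degree_eq_zero.2 ((degree_eq_iff_natDegree_eq hg0).2 hg)).dvd
    have hrefl : (reflect (n - 1) h).natDegree < n :=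
      natDegree_reflect_le.trans_lt (max_lt (by omega) (by omega))
    have hmem := H (toFn n (reflect (n - 1) h))
      (by rw [ofFn_comp_toFn_eq_id_of_natDegree_lt hrefl, reflect_reflect])
    change g ∣ _ at hmem
    rw [ofFn_comp_toFn_eq_id_of_natDegree_lt hrefl, ← mul_one h,
      reflect_mul_eq_reverse_mul_reflect (by rw [mul_one]; omega), reflect_one] at hmem
    exact (isCoprime_X_pow_of_dvd_X_pow_sub_one hn ⟨h, hgh⟩ _).dvd_of_dvd_mul_right hmem
  · rintro hdvd y ⟨b, hb⟩
    have hy := natDegree_reflect_ofFn_le y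
    change g ∣ _
    rw [← reflect_reflect (N := n - 1) (p := ofFn n y), hb,
      reflect_mul_eq_reverse_mul_reflect (hb ▸ hy)]
    exact hdvd.mul_right _

theorem dualCode_cyclicCode_subset_iff (hn : 0 < n) (hg : g ∣ X ^ n - 1) :
    dualCode (cyclicCode g n) ⊆ cyclicCode g n ↔ g * g.reverse ∣ X ^ n - 1 := by
  obtain ⟨h, hgh⟩ := hg
  rw [dualCode_cyclicCode_subset_iff_dvd_reverse hn hgh, dvd_reverse_iff_mul_reverse_dvd hn hgh]

end CyclicCode

section Idempotents

variable {F A ι : Type*} [CommSemiring A] [Fintype ι] {η : ι → A}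

theorem OrthogonalIdempotents.sum_algebraMap_mul_mul [CommSemiring F] [Algebra F A]
    (hη : OrthogonalIdempotents η) (b : ι → F) (k : ι) :
    (∑ i, algebraMap F A (b i) * η i) * η k = algebraMap F A (b k) * η k := by
  rw [Finset.sum_mul, Finset.sum_eq_single k (fun i _ hik => by rw [mul_assoc, hη.ortho hik,
    mul_zero]) (by simp), mul_assoc, (hη.idem k).eq]

def OrthogonalIdempotents.combinationHom (F : Type*) [CommSemiring F] [Algebra F A]
    (hη : OrthogonalIdempotents η) : (ι → F) →ₙ+* A where
  toFun b := ∑ i, algebraMap F A (b i) * η i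
  map_mul' b c := by
    rw [Finset.mul_sum]
    refine Finset.sum_congr rfl fun k _ => ?_
    rw [mul_left_comm, hη.sum_algebraMap_mul_mul, ← mul_assoc, ← map_mul, mul_comm (c k),
      Pi.mul_apply]
  map_zero' := by simp
  map_add' b c := by simp [add_mul, Finset.sum_add_distrib]

theorem OrthogonalIdempotents.combinationHom_bijective [Field F] [Algebra F A]
    (hη : OrthogonalIdempotents η) (hne : ∀ i, η i ≠ 0)
    (hspan : ∀ s : A, ∃ b : ι → F, s = ∑ i, algebraMap F A (b i) * η i) :
    Function.Bijective (hη.combinationHom F) := by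
  refine ⟨(injective_iff_map_eq_zero _).2 fun b hb => funext fun k => ?_,
    fun s => (hspan s).imp fun b hb => hb.symm⟩
  have hk : algebraMap F A (b k) * η k = 0 := by
    rw [← hη.sum_algebraMap_mul_mul]
    exact (congrArg (· * η k) hb).trans (zero_mul _)
  by_contra hbk
  exact hne k ((IsUnit.map _ (isUnit_iff_ne_zero.2 hbk)).mul_right_eq_zero.mp hk)

noncomputable def OrthogonalIdempotents.combinationEquiv (F : Type*) [Field F] [Algebra F A]
    (hη : OrthogonalIdempotents η) (hne : ∀ i, η i ≠ 0)
    (hspan : ∀ s : A, ∃ b : ι → F, s = ∑ i, algebraMap F A (b i) * η i) : (ι → F) ≃+* A :=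
  RingEquiv.ofBijective _ (hη.combinationHom_bijective hne hspan)

theorem OrthogonalIdempotents.preimage_combinationEquiv_piCode [Field F] [Algebra F A]
    {m : Type*} (hη : OrthogonalIdempotents η) (hne : ∀ i, η i ≠ 0)
    (hspan : ∀ s : A, ∃ b : ι → F, s = ∑ i, algebraMap F A (b i) * η i)
    (C : ι → Set (m → F)) :
    ((hη.combinationEquiv F hne hspan).symm ∘ ·) ⁻¹' piCode C =
      {x | ∃ cs : ι → m → F, (∀ i, cs i ∈ C i) ∧
        x = fun j => ∑ i, algebraMap F A (cs i j) * η i} := by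
  set E := hη.combinationEquiv F hne hspan
  ext x
  constructor
  · intro hx
    exact ⟨fun i j => E.symm (x j) i, hx, funext fun j => (E.apply_symm_apply _).symm⟩
  · rintro ⟨cs, hcs, rfl⟩ i
    exact (funext fun j => congrFun (E.symm_apply_apply fun i => cs i j) i) ▸ hcs i

end Idempotents

theorem stmt18_general (n : ℕ) (hn : 0 < n)
    (F : Type*) [Field F]
    (η : Fin 5 → Rring F)
    (hne : ∀ i, η i ≠ 0) (hidem : ∀ i, η i ^ 2 = η i)
    (horth : ∀ i j, i ≠ j → η i * η j = 0)
    (hcrt : ∀ s : Rring F, ∃ b : Fin 5 → F,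
      s = ∑ i, algebraMap F (Rring F) (b i) * η i)
    (g : Fin 5 → F[X])
    (hgdvd : ∀ i, g i ∣ (X : F[X]) ^ n - 1)
    (Ccode : Set (Fin n → Rring F))
    (hCcode : Ccode = {x | ∃ cs : Fin 5 → (Fin n → F),
      (∀ i, g i ∣ (∑ j, Polynomial.C (cs i j) * (X : F[X]) ^ (j : ℕ))) ∧
      x = fun j => ∑ i, algebraMap F (Rring F) (cs i j) * η i}) :
    ({y : Fin n → Rring F | ∀ c ∈ Ccode, ∑ j, y j * c j = 0} ⊆ Ccode) ↔
      ∀ i : Fin 5, g i * (g i).reverse ∣ (X : F[X]) ^ n - 1 := by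
  classical
  have hη : OrthogonalIdempotents η :=
    ⟨fun i => (sq (η i)).symm.trans (hidem i), fun i j => horth i j⟩
  have hC : Ccode = ((hη.combinationEquiv F hne hcrt).symm ∘ ·) ⁻¹'
      piCode fun i => cyclicCode (g i) n := by
    simp only [hCcode, hη.preimage_combinationEquiv_piCode, cyclicCode, Set.mem_ofPred_eq,
      ofFn_eq_sum_C_mul_X_pow]
  change dualCode Ccode ⊆ Ccode ↔ _
  rw [hC, dualCode_preimage_comp_subset_iff, dualCode_piCode fun i => zero_mem_cyclicCode _ _,
    piCode_subset_piCode_iff fun i => zero_mem_dualCode _]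
  exact forall_congr' fun i => dualCode_cyclicCode_subset_iff hn (hgdvd i)

/-- let `C = C₁η₁ ⊕ ⋯ ⊕ C₅η₅` be a cyclic code of length `n` over `R`
with component (monic) generator polynomials `g₁,...,g₅` dividing `xⁿ-1`. Then
`C⊥ ⊆ C` if and only if for every `i`, `xⁿ - 1 ≡ 0 (mod gᵢ(x)·gᵢ*(x))`, where `gᵢ*`
is the reciprocal polynomial of `gᵢ`. Codes are realized as sets of coefficient
vectors in `Rⁿ`, and duality is with respect to `x·y = Σ xᵢyᵢ`. -/
theorem stmt18 (p r n : ℕ) (hn : 0 < n) (hp : p.Prime) (hodd : Odd p)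
    (h4 : 4 ∣ (p - 1)) (hr : 0 < r)
    (F : Type*) [Field F] [Fintype F] (hcard : Fintype.card F = p ^ r)
    (η : Fin 5 → Rring F)
    (hne : ∀ i, η i ≠ 0) (hidem : ∀ i, η i ^ 2 = η i)
    (horth : ∀ i j, i ≠ j → η i * η j = 0) (hsum : ∑ i, η i = 1)
    (hcrt : ∀ s : Rring F, ∃ b : Fin 5 → F,
      s = ∑ i, algebraMap F (Rring F) (b i) * η i)
    (g : Fin 5 → F[X])
    (hgmonic : ∀ i, (g i).Monic) (hgdvd : ∀ i, g i ∣ (X : F[X]) ^ n - 1)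
    (Ccode : Set (Fin n → Rring F))
    (hCcode : Ccode = {x | ∃ cs : Fin 5 → (Fin n → F),
      (∀ i, g i ∣ (∑ j, Polynomial.C (cs i j) * (X : F[X]) ^ (j : ℕ))) ∧
      x = fun j => ∑ i, algebraMap F (Rring F) (cs i j) * η i}) :
    ({y : Fin n → Rring F | ∀ c ∈ Ccode, ∑ j, y j * c j = 0} ⊆ Ccode) ↔
      ∀ i : Fin 5, g i * (g i).reverse ∣ (X : F[X]) ^ n - 1 :=
  stmt18_general n hn F η hne hidem horth hcrt g hgdvd Ccode hCcode
end
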